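/- Let Γ ⊢ p → t be a derivable sequent in the unnamed system OPT? with dim p ≥ 2. Then Γ, as a set of pairs, is the graph of a bijection between the set p⁺ of leaf addresses of p and the set t• of source addresses of t. -/

import Mathlib

set_option autoImplicit false
open Classical

@[reducible] def Addr : ℕ → Type
  | 0 => Unit
  | n + 1 => List (Addr n)

instance Addr.decEq : ∀ n, DecidableEq (Addr n)
  | 0 => fun a b => Decidable.isTrue (by cases a; cases b; rfl)
  | n + 1 => @instDecidableEqList _ (Addr.decEq n)

def Addr.eps : ∀ n, Addr n
  | 0 => ()
  | _ + 1 => ([] : List _)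

def Addr.cat : ∀ {n}, Addr n → Addr n → Addr n
  | 0, _, _ => ()
  | _ + 1, a, b => List.append a b

def Addr.le : ∀ {n}, Addr n → Addr n → Prop
  | 0, _, _ => True
  | _ + 1, a, b => List.IsPrefix a b

inductive PreOp : ℕ → Type
  | null : ∀ {n}, PreOp n
  | point : PreOp 0
  | nd {n : ℕ} (f : Addr n → PreOp n) : PreOp (n + 1)
  | degen {n : ℕ} (q : PreOp n) : PreOp (n + 2)

namespace PreOp

def srcFn : ∀ {n}, PreOp (n + 1) → Addr n → PreOp n
  | _, nd f => f
  | _, _ => fun _ => null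

def nodes {n : ℕ} (p : PreOp (n + 1)) : Set (Addr n) := {a | p.srcFn a ≠ null}

def src {n : ℕ} (p : PreOp (n + 1)) (a : Addr n) : PreOp n := p.srcFn a

def IsDeg : ∀ {n}, PreOp n → Prop
  | _, degen _ => True
  | _, _ => False

def leaves : ∀ {n}, PreOp (n + 1) → Set (Addr n)
  | 0, _ => ∅
  | _ + 1, degen _ => {Addr.eps _}
  | _ + 1, nd f =>
      {l | ∃ a b, f a ≠ null ∧ (f a).srcFn b ≠ null ∧ l = List.concat a b ∧ f l = null}
  | _ + 1, _ => ∅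

def graftI : ∀ {n}, PreOp (n + 1) → Addr n → PreOp n → PreOp (n + 1)
  | _, nd f, r, q => nd (fun a => if a = r then q else f a)
  | _, p, _, _ => p

def corolla {n : ℕ} (p : PreOp n) : PreOp (n + 1) :=
  nd (fun a => if a = Addr.eps n then p else null)

/-- `e_[l] p = s_[b] s_[a] p` for a leaf address `l = [a[b]]`. -/
def edge {m : ℕ} (p : PreOp (m + 2)) (l : Addr (m + 1)) : PreOp m :=
  match (l : List (Addr m)).getLast? with
  | none => null
  | some b => (p.srcFn (List.dropLast l)).srcFn b

/-- The type of the target of a sequent whose subject has dimension `n`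
(`∅` -- encoded as `PUnit` -- in dimension `0`). -/
@[reducible] def Tgt : ℕ → Type
  | 0 => PUnit
  | n + 1 => PreOp n

/-- The type of contexts for sequents whose subject has dimension `n`: a set of pairs
`[l]/[q]` of an `(n-1)`-address and an `(n-2)`-address (trivial for `n ≤ 1`). -/
@[reducible] def LCtx : ℕ → Type
  | 0 => PUnit
  | 1 => PUnit
  | n + 2 => Set (Addr (n + 1) × Addr n)

/-- Address rewriting used in substitution: if `a = r ++ [b] ++ a'` with `[x]/[b] ∈ Υ`,
rewrite `a` to `r ++ x ++ a'`; otherwise leave `a` unchanged. -/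
noncomputable def chiN {k : ℕ} (Υ : Set (Addr (k + 1) × Addr k)) (r a : Addr (k + 1)) :
    Addr (k + 1) :=
  match (a : List (Addr k))[(r : List (Addr k)).length]? with
  | none => a
  | some b =>
    if h : (a : List (Addr k)).take (r : List (Addr k)).length = r ∧
        ∃ x : Addr (k + 1), (x, b) ∈ Υ then
      (List.append (List.append r (choose h.2))
        ((a : List (Addr k)).drop ((r : List (Addr k)).length + 1)) : List (Addr k))
    else a

/-- Address rewriting used when substituting a degenerate preopetope: if `a = r ++ [b] ++ a'`,
rewrite `a` to `r ++ a'`. -/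
def chiD {k : ℕ} (r a : Addr (k + 1)) : Addr (k + 1) :=
  if (a : List (Addr k)).take (r : List (Addr k)).length = r ∧
      (r : List (Addr k)).length < (a : List (Addr k)).length then
    (List.append r ((a : List (Addr k)).drop ((r : List (Addr k)).length + 1)) : List (Addr k))
  else a

/-- Substitution `t ▫_[r] q` (Definition 4.1.6), relative to the context `Υ` of the
sequent of `q`. -/
noncomputable def psub :
    ∀ {m}, PreOp (m + 1) → Addr m → PreOp (m + 1) → LCtx (m + 1) → PreOp (m + 1)
  | 0, _, _, q, _ => q
  | _ + 1, nd g, r, degen w, _ =>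
      if ∀ b, g b ≠ null → b = r then degen w
      else nd (fun a =>
        if h : ∃ b, b ≠ r ∧ g b ≠ null ∧ chiD r b = a then g (choose h) else null)
  | k + 1, nd g, r, nd h, Υ =>
      nd (fun a =>
        if h1 : ∃ s, h s ≠ null ∧ a = List.append r s then h (choose h1)
        else if h2 : ∃ b, b ≠ r ∧ g b ≠ null ∧
            chiN (Υ : Set (Addr (k + 1) × Addr k)) r b = a then g (choose h2)
        else null)
  | _ + 1, t, _, _, _ => t

/-- Rewriting of the remaining context entries in the `graft` rule: a pair `[a]/[r[y]r']`
with `[x]/[y] ∈ Υ` is rewritten to `[a]/[r x r']`. -/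
noncomputable def rewriteCtx :
    ∀ {m}, LCtx (m + 1) → Addr m → Set (Addr (m + 1) × Addr m) → Set (Addr (m + 1) × Addr m)
  | 0, _, _, Γ => Γ
  | k + 1, Υ, r, Γ =>
      {ab | ∃ xy ∈ Γ, ab = (xy.1, chiN (Υ : Set (Addr (k + 1) × Addr k)) r xy.2)}

end PreOp

/-- Derivability of sequents `Γ ⊢ p → t` in the unnamed system `OPT?` (Figure 4.1.1). -/
inductive Derives : ∀ n, PreOp.LCtx n → PreOp n → PreOp.Tgt n → Prop
  | point : Derives 0 PUnit.unit PreOp.point PUnit.unit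
  | degen {n : ℕ} {Γ : PreOp.LCtx n} {p : PreOp n} {t : PreOp.Tgt n} :
      Derives n Γ p t →
      Derives (n + 2) {(Addr.eps (n + 1), Addr.eps n)} (PreOp.degen p) (PreOp.corolla p)
  | shift0 {Γ : PreOp.LCtx 0} {p : PreOp 0} {t : PreOp.Tgt 0} :
      Derives 0 Γ p t →
      Derives 1 PUnit.unit (PreOp.corolla p) p
  | shiftS {n : ℕ} {Γ : PreOp.LCtx (n + 1)} {p : PreOp (n + 1)} {t : PreOp.Tgt (n + 1)} :
      Derives (n + 1) Γ p t →
      Derives (n + 2) {ab | ∃ a ∈ p.nodes, ab = (([a] : List (Addr n)), a)}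
        (PreOp.corolla p) p
  | graft {m : ℕ} {Γ : Set (Addr (m + 1) × Addr m)} {p : PreOp (m + 2)} {t : PreOp (m + 1)}
      {l : Addr (m + 1)} {r : Addr m} {q : PreOp (m + 1)} {Υ : PreOp.LCtx (m + 1)}
      {u : PreOp m} :
      Derives (m + 2) (insert (l, r) Γ) p t →
      (l, r) ∉ Γ →
      Derives (m + 1) Υ q u →
      PreOp.edge p l = u →
      Derives (m + 2)
        (PreOp.rewriteCtx Υ r Γ ∪
          {ab | ∃ s ∈ q.nodes, ab = (List.concat l s, Addr.cat r s)})
        (p.graftI l q) (PreOp.psub t r q Υ)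

/-!
Induction on the derivation, with a stronger invariant: subject and target are prefix-closed
trees of sources, `Γ` is the graph of a bijection `p⁺ ≅ t•`, and every pair `[x]/[y] ∈ Γ`
matches the edge of `p` at `x` with the source of `t` at `y`.

In the graft case the leaves of `p ∘̃_[l] q` are those of `p` other than `l`, together with the
`l[s]` for `[s] ∈ q•`; the sources of `t ▫_[r] q` are the `r s` for `[s] ∈ q•`, together with
the images of the other sources of `t` under the address rewriting `chiN`. The edge condition at
`[l]/[r]` says `s_[r] t` is the target of `q`, whose sources correspond to the leaves of `q`;
since these leaves form a prefix antichain, `chiN` is injective on the sources of `t` other than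
`r` and misses the addresses `r s`. The new context is then the disjoint union of the rewritten
bijection and `l[s] ↦ r s`.
-/

def IsBijGraph {α β : Type*} (R : Set (α × β)) (A : Set α) (B : Set β) : Prop :=
  (∀ x ∈ R, x.1 ∈ A ∧ x.2 ∈ B) ∧ (∀ a ∈ A, ∃! b, (a, b) ∈ R) ∧
    (∀ b ∈ B, ∃! a, (a, b) ∈ R)

namespace IsBijGraph

variable {α β γ : Type*} {R R' : Set (α × β)} {A A' : Set α} {B B' : Set β}

theorem image_pair {f : γ → α} {g : γ → β} {S : Set γ} (hf : S.InjOn f) (hg : S.InjOn g) :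
    IsBijGraph ((fun s => (f s, g s)) '' S) (f '' S) (g '' S) := by
  refine ⟨?_, ?_, ?_⟩
  · rintro _ ⟨s, hs, rfl⟩
    exact ⟨⟨s, hs, rfl⟩, ⟨s, hs, rfl⟩⟩
  · rintro _ ⟨s, hs, rfl⟩
    refine ⟨g s, ⟨s, hs, rfl⟩, ?_⟩
    rintro _ ⟨s', hs', he⟩
    obtain ⟨h1, rfl⟩ := Prod.mk.inj he
    rw [hf hs' hs h1]
  · rintro _ ⟨s, hs, rfl⟩
    refine ⟨f s, ⟨s, hs, rfl⟩, ?_⟩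
    rintro _ ⟨s', hs', he⟩
    obtain ⟨rfl, h2⟩ := Prod.mk.inj he
    rw [hg hs' hs h2]

theorem of_insert {a : α} {b : β} (h : IsBijGraph (insert (a, b) R) A B) (hab : (a, b) ∉ R) :
    IsBijGraph R (A \ {a}) (B \ {b}) := by
  obtain ⟨hmem, hA, hB⟩ := h
  have hab' : (a, b) ∈ insert (a, b) R := Set.mem_insert _ _
  refine ⟨fun ⟨x, y⟩ hxy => ?_, fun x hx => ?_, fun y hy => ?_⟩
  · have hxy' := Set.mem_insert_of_mem (a, b) hxy
    refine ⟨⟨(hmem _ hxy').1, ?_⟩, ⟨(hmem _ hxy').2, ?_⟩⟩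
    · rintro rfl
      obtain rfl := (hA x (hmem _ hab').1).unique hxy' hab'
      exact hab hxy
    · rintro rfl
      obtain rfl := (hB y (hmem _ hab').2).unique hxy' hab'
      exact hab hxy
  · obtain ⟨y, hxy, hy⟩ := hA x hx.1
    have hxy : (x, y) ∈ R :=
      (Set.mem_insert_iff.mp hxy).resolve_left fun he => hx.2 (Prod.mk.inj he).1
    exact ⟨y, hxy, fun y' hy' => hy y' (Set.mem_insert_of_mem _ hy')⟩
  · obtain ⟨x, hxy, hx⟩ := hB y hy.1
    have hxy : (x, y) ∈ R :=
      (Set.mem_insert_iff.mp hxy).resolve_left fun he => hy.2 (Prod.mk.inj he).2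
    exact ⟨x, hxy, fun x' hx' => hx x' (Set.mem_insert_of_mem _ hx')⟩

theorem image_snd (h : IsBijGraph R A B) {f : β → γ} (hf : B.InjOn f) :
    IsBijGraph (Prod.map id f '' R) A (f '' B) := by
  obtain ⟨hmem, hA, hB⟩ := h
  refine ⟨?_, fun x hx => ?_, ?_⟩
  · rintro _ ⟨xy, hxy, rfl⟩
    exact ⟨(hmem _ hxy).1, ⟨xy.2, (hmem _ hxy).2, rfl⟩⟩
  · obtain ⟨y, hxy, hy⟩ := hA x hx
    refine ⟨f y, ⟨(x, y), hxy, rfl⟩, ?_⟩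
    rintro _ ⟨⟨x', y'⟩, hxy', he⟩
    obtain ⟨rfl, rfl⟩ := Prod.mk.inj he
    rw [hy y' hxy']
  · rintro _ ⟨y, hy, rfl⟩
    obtain ⟨x, hxy, hx⟩ := hB y hy
    refine ⟨x, ⟨(x, y), hxy, rfl⟩, ?_⟩
    rintro _ ⟨⟨x', y'⟩, hxy', he⟩
    obtain ⟨rfl, hfy⟩ := Prod.mk.inj he
    exact hx x' (hf (hmem _ hxy').2 hy hfy ▸ hxy')

theorem union (h : IsBijGraph R A B) (h' : IsBijGraph R' A' B') (hA : Disjoint A A')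
    (hB : Disjoint B B') : IsBijGraph (R ∪ R') (A ∪ A') (B ∪ B') := by
  refine ⟨?_, ?_, ?_⟩
  · rintro x (hx | hx)
    · exact ⟨Or.inl (h.1 x hx).1, Or.inl (h.1 x hx).2⟩
    · exact ⟨Or.inr (h'.1 x hx).1, Or.inr (h'.1 x hx).2⟩
  · rintro x (hx | hx)
    · obtain ⟨y, hxy, hy⟩ := h.2.1 x hx
      refine ⟨y, Or.inl hxy, fun y' => Or.rec (hy y') fun hxy' => ?_⟩
      exact (Set.disjoint_left.mp hA hx (h'.1 _ hxy').1).elim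
    · obtain ⟨y, hxy, hy⟩ := h'.2.1 x hx
      refine ⟨y, Or.inr hxy, fun y' => Or.rec (fun hxy' => ?_) (hy y')⟩
      exact (Set.disjoint_left.mp hA (h.1 _ hxy').1 hx).elim
  · rintro y (hy | hy)
    · obtain ⟨x, hxy, hx⟩ := h.2.2 y hy
      refine ⟨x, Or.inl hxy, fun x' => Or.rec (hx x') fun hxy' => ?_⟩
      exact (Set.disjoint_left.mp hB hy (h'.1 _ hxy').2).elim
    · obtain ⟨x, hxy, hx⟩ := h'.2.2 y hy
      refine ⟨x, Or.inr hxy, fun x' => Or.rec (fun hxy' => ?_) (hx x')⟩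
      exact (Set.disjoint_left.mp hB (h.1 _ hxy').2 hy).elim

theorem singleton (a : α) (b : β) : IsBijGraph {(a, b)} {a} {b} := by
  refine ⟨?_, ?_, ?_⟩ <;> simp

end IsBijGraph

theorem Addr.cat_injective : ∀ {n : ℕ} (r : Addr n), Function.Injective (Addr.cat r)
  | 0, _ => fun _ _ _ => rfl
  | _ + 1, _ => fun _ _ h => List.append_cancel_left h

namespace PreOp

def IsTreeFn {k : ℕ} (f : Addr (k + 1) → PreOp (k + 1)) : Prop :=
  ∀ (a : Addr (k + 1)) (c : Addr k),
    f (a ++ [c]) ≠ null → f a ≠ null ∧ (f a).srcFn c ≠ null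

def IsTree : ∀ {n}, PreOp n → Prop
  | _ + 2, p => IsTreeFn p.srcFn
  | _, _ => True

theorem IsTreeFn.ne_null_of_prefix {k : ℕ} {f : Addr (k + 1) → PreOp (k + 1)}
    (hf : IsTreeFn f) {a b : Addr (k + 1)} (hb : f b ≠ null) (hab : a <+: b) : f a ≠ null := by
  induction b using List.reverseRecOn with
  | nil => rwa [List.prefix_nil.mp hab]
  | append_singleton b c ih =>
    rcases List.prefix_concat_iff.mp hab with rfl | hab
    · exact hb
    · exact ih (hf b c hb).1 hab

theorem IsTreeFn.eq_append_cons {k : ℕ} {f : Addr (k + 1) → PreOp (k + 1)} (hf : IsTreeFn f)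
    {r b : Addr (k + 1)} (hb : f b ≠ null) (hrb : r <+: b) (hbr : b ≠ r) :
    ∃ c d, b = r ++ c :: d ∧ (f r).srcFn c ≠ null := by
  obtain ⟨_ | ⟨c, d⟩, rfl⟩ := hrb
  · exact absurd (List.append_nil r) hbr
  · refine ⟨c, d, rfl, (hf r c (hf.ne_null_of_prefix hb ?_)).2⟩
    exact ⟨d, by simp⟩

theorem mem_leaves_nd {k : ℕ} {f : Addr (k + 1) → PreOp (k + 1)} {x : Addr (k + 1)} :
    x ∈ (nd f).leaves ↔
      ∃ a c, f a ≠ null ∧ (f a).srcFn c ≠ null ∧ x = a ++ [c] ∧ f x = null := by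
  simp only [leaves, List.concat_eq_append]
  rfl

theorem leaves_degen {k : ℕ} (w : PreOp k) : (degen w : PreOp (k + 2)).leaves = {[]} := rfl

theorem eq_nil_or_of_mem_leaves {k : ℕ} {q : PreOp (k + 2)} {x : Addr (k + 1)}
    (hx : x ∈ q.leaves) :
    x = [] ∨ ∃ a c, x = a ++ [c] ∧ q.srcFn a ≠ null ∧ (q.srcFn a).srcFn c ≠ null := by
  cases q with
  | null => exact hx.elim
  | nd f =>
    obtain ⟨a, c, ha, hc, rfl, -⟩ := mem_leaves_nd.mp hx
    exact Or.inr ⟨a, c, rfl, ha, hc⟩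
  | degen w => exact Or.inl hx

theorem IsTree.not_prefix_node {k : ℕ} {q : PreOp (k + 2)} (hq : IsTree q) {x s : Addr (k + 1)}
    (hx : x ∈ q.leaves) (hs : q.srcFn s ≠ null) : ¬ x <+: s := by
  cases q with
  | null => exact hx.elim
  | nd f =>
    obtain ⟨-, -, -, -, -, hfx⟩ := mem_leaves_nd.mp hx
    exact fun hxs => IsTreeFn.ne_null_of_prefix hq hs hxs hfx
  | degen w => exact absurd rfl hs

theorem IsTree.leaf_antichain {k : ℕ} {q : PreOp (k + 2)} (hq : IsTree q) {x y : Addr (k + 1)}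
    (hx : x ∈ q.leaves) (hy : y ∈ q.leaves) (hxy : x <+: y) : x = y := by
  cases q with
  | null => exact hx.elim
  | nd f =>
    obtain ⟨a, c, ha, -, rfl, -⟩ := mem_leaves_nd.mp hy
    rcases List.prefix_concat_iff.mp hxy with rfl | hxa
    · rfl
    · exact (hq.not_prefix_node hx ha hxa).elim
  | degen w => exact hx.trans hy.symm

theorem edge_append {m : ℕ} (p : PreOp (m + 2)) (a : Addr (m + 1)) (b : Addr m) :
    p.edge (a ++ [b]) = (p.srcFn a).srcFn b := by
  simp [edge]

theorem corolla_ne_null {n : ℕ} (p : PreOp n) : corolla p ≠ null := nofun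

theorem nodes_corolla {n : ℕ} {p : PreOp n} (hp : p ≠ null) :
    (corolla p).nodes = {Addr.eps n} := by
  ext a
  by_cases ha : a = Addr.eps n <;> simp [nodes, srcFn, corolla, ha, hp]

theorem leaves_corolla {n : ℕ} {p : PreOp (n + 1)} (hp : p ≠ null) :
    (corolla p).leaves = (fun b => [b]) '' p.nodes := by
  ext x
  rw [corolla, mem_leaves_nd]
  constructor
  · rintro ⟨a, b, ha, hb, rfl, -⟩
    obtain rfl : a = [] := not_not.mp fun h => ha (if_neg h)
    exact ⟨b, hb, rfl⟩
  · rintro ⟨b, hb, rfl⟩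
    refine ⟨[], b, ?_, ?_, rfl, if_neg (List.cons_ne_nil b [])⟩ <;> rw [if_pos (by rfl)]
    exacts [hp, hb]

theorem isTree_corolla : ∀ {n : ℕ} (p : PreOp n), IsTree (corolla p)
  | 0, _ => trivial
  | _ + 1, _ => fun _ _ h => (h (by simp [corolla, srcFn, Addr.eps])).elim

section GraftI

variable {k : ℕ} {f : Addr (k + 1) → PreOp (k + 1)} {l : Addr (k + 1)} {q : PreOp (k + 1)}

theorem graftI_nd : graftI (nd f) l q = nd fun a => if a = l then q else f a := rfl

theorem srcFn_graftI (a : Addr (k + 1)) :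
    (graftI (nd f) l q).srcFn a = if a = l then q else f a := rfl

theorem edge_graftI_append (s : Addr k) : (graftI (nd f) l q).edge (l ++ [s]) = q.srcFn s := by
  rw [edge_append, srcFn_graftI, if_pos rfl]

theorem edge_graftI_of_mem_leaves (hl : l ∈ (nd f).leaves) {x : Addr (k + 1)}
    (hx : x ∈ (nd f).leaves) : (graftI (nd f) l q).edge x = (nd f).edge x := by
  obtain ⟨a, c, ha, -, rfl, -⟩ := mem_leaves_nd.mp hx
  obtain ⟨-, -, -, -, -, hfl⟩ := mem_leaves_nd.mp hl
  rw [edge_append, edge_append, srcFn_graftI, if_neg (by rintro rfl; exact ha hfl)]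
  rfl

theorem append_not_mem_leaves (hl : l ∈ (nd f).leaves) (s : Addr k) :
    l ++ [s] ∉ (nd f).leaves := fun h => by
  obtain ⟨a, c, ha, -, he, -⟩ := mem_leaves_nd.mp h
  obtain ⟨-, -, -, -, -, hfl⟩ := mem_leaves_nd.mp hl
  rw [(List.append_singleton_inj.mp he).1] at hfl
  exact ha hfl

theorem isTreeFn_graftI (hf : IsTreeFn f) (hl : l ∈ (nd f).leaves) :
    IsTreeFn (graftI (nd f) l q).srcFn := by
  obtain ⟨a₀, c₀, ha₀, hc₀, rfl, hfl⟩ := mem_leaves_nd.mp hl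
  intro a c h
  rw [srcFn_graftI] at h ⊢
  by_cases hac : a ++ [c] = a₀ ++ [c₀]
  · obtain ⟨rfl, rfl⟩ := List.append_singleton_inj.mp hac
    rw [if_neg (by simp)]
    exact ⟨ha₀, hc₀⟩
  · rw [if_neg hac] at h
    have hfa := hf a c h
    rw [if_neg (by rintro rfl; exact hfa.1 hfl)]
    exact hfa

theorem leaves_graftI (hf : IsTreeFn f) (hl : l ∈ (nd f).leaves) (hq : q ≠ null) :
    (graftI (nd f) l q).leaves = ((nd f).leaves \ {l}) ∪ (fun s => l ++ [s]) '' q.nodes := by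
  obtain ⟨-, -, -, -, -, hfl⟩ := mem_leaves_nd.mp hl
  ext x
  rw [graftI_nd, mem_leaves_nd, Set.mem_union, Set.mem_sdiff, mem_leaves_nd,
    Set.mem_singleton_iff, Set.mem_image]
  constructor
  · rintro ⟨a, c, ha, hc, rfl, hx⟩
    have hxl : a ++ [c] ≠ l := by rintro he; rw [if_pos he] at hx; exact hq hx
    rw [if_neg hxl] at hx
    by_cases hal : a = l
    · rw [if_pos hal] at hc
      exact Or.inr ⟨c, hc, hal ▸ rfl⟩
    · rw [if_neg hal] at ha hc
      exact Or.inl ⟨⟨a, c, ha, hc, rfl, hx⟩, hxl⟩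
  · rintro (⟨⟨a, c, ha, hc, rfl, hx⟩, hxl⟩ | ⟨s, hs, rfl⟩)
    · have hal : a ≠ l := by rintro rfl; exact ha hfl
      exact ⟨a, c, by rwa [if_neg hal], by rwa [if_neg hal], rfl, by rwa [if_neg hxl]⟩
    · have hsl : l ++ [s] ≠ l := by simp
      refine ⟨l, s, by rwa [if_pos rfl], by rwa [if_pos rfl], rfl, ?_⟩
      rw [if_neg hsl]
      exact not_not.mp fun h => hf.ne_null_of_prefix h (List.prefix_append l [s]) hfl

theorem disjoint_leaves_append (hl : l ∈ (nd f).leaves) :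
    Disjoint ((nd f).leaves \ {l}) ((fun s => l ++ [s]) '' q.nodes) :=
  Set.disjoint_left.mpr <| by
    rintro _ hx ⟨s, -, rfl⟩
    exact append_not_mem_leaves hl s hx.1

end GraftI

section Rewrite

variable {k : ℕ} {Υ : Set (Addr (k + 1) × Addr k)} {r : Addr (k + 1)}

theorem chiN_of_not_prefix {a : Addr (k + 1)} (h : ¬ r <+: a) : chiN Υ r a = a := by
  unfold chiN
  split
  · rfl
  · exact dif_neg fun h' => h (List.prefix_iff_eq_take.mpr h'.1.symm)

theorem chiN_self : chiN Υ r r = r := by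
  unfold chiN
  rw [List.getElem?_eq_none le_rfl]

theorem chiN_append_cons (c : Addr k) (d : Addr (k + 1)) :
    chiN Υ r (r ++ c :: d) =
      if h : ∃ x, (x, c) ∈ Υ then r ++ choose h ++ d else r ++ c :: d := by
  unfold chiN
  simp only [List.getElem?_append_right le_rfl, Nat.sub_self, List.getElem?_cons_zero,
    List.take_left' rfl, true_and]
  split_ifs
  · simp
  · rfl

theorem chiN_append_cons_of_unique {c : Addr k} {x : Addr (k + 1)} (hx : (x, c) ∈ Υ)
    (hu : ∀ y, (y, c) ∈ Υ → y = x) (d : Addr (k + 1)) :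
    chiN Υ r (r ++ c :: d) = r ++ x ++ d := by
  have h : ∃ x, (x, c) ∈ Υ := ⟨x, hx⟩
  rw [chiN_append_cons, dif_pos h, hu _ (choose_spec h)]

theorem chiN_append_singleton {a : Addr (k + 1)} (har : a ≠ r) (c : Addr k) :
    chiN Υ r (a ++ [c]) = chiN Υ r a ++ [c] := by
  by_cases hra : r <+: a
  · obtain ⟨_ | ⟨c₀, d⟩, rfl⟩ := hra
    · exact absurd (List.append_nil r) har
    · rw [List.append_assoc, List.cons_append, chiN_append_cons, chiN_append_cons]
      split_ifs <;> simp
  · rw [chiN_of_not_prefix hra]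
    by_cases hr : r = a ++ [c]
    · rw [← hr, chiN_self]
    · rw [chiN_of_not_prefix fun h => (List.prefix_concat_iff.mp h).elim hr hra]

theorem chiD_of_not_prefix {a : Addr (k + 1)} (h : ¬ r <+: a) : chiD r a = a :=
  if_neg fun h' => h (List.prefix_iff_eq_take.mpr h'.1.symm)

theorem chiD_append_cons (c : Addr k) (d : Addr (k + 1)) : chiD r (r ++ c :: d) = r ++ d := by
  unfold chiD
  rw [if_pos ⟨List.take_left' rfl, by simp⟩]
  simp

end Rewrite

/-- `t'` is `t ▫_[r] q`, the sources of `t` other than `r` being relocated along `ρ`. -/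
structure IsSubst {m : ℕ} (t' t : PreOp (m + 1)) (r : Addr m) (q : PreOp (m + 1))
    (ρ : Addr m → Addr m) : Prop where
  injOn : (t.nodes \ {r}).InjOn ρ
  disjoint : Disjoint (ρ '' (t.nodes \ {r})) (Addr.cat r '' q.nodes)
  nodes_subset : t'.nodes ⊆ ρ '' (t.nodes \ {r}) ∪ Addr.cat r '' q.nodes
  srcFn_rewrite : ∀ b ∈ t.nodes \ {r}, t'.srcFn (ρ b) = t.srcFn b
  srcFn_cat : ∀ s ∈ q.nodes, t'.srcFn (Addr.cat r s) = q.srcFn s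

theorem IsSubst.nodes_eq {m : ℕ} {t' t : PreOp (m + 1)} {r : Addr m} {q : PreOp (m + 1)}
    {ρ : Addr m → Addr m} (h : IsSubst t' t r q ρ) :
    t'.nodes = ρ '' (t.nodes \ {r}) ∪ Addr.cat r '' q.nodes := by
  refine h.nodes_subset.antisymm (Set.union_subset ?_ ?_)
  · rintro _ ⟨b, hb, rfl⟩
    exact (h.srcFn_rewrite b hb).trans_ne hb.1
  · rintro _ ⟨s, hs, rfl⟩
    exact (h.srcFn_cat s hs).trans_ne hs

theorem IsSubst.of_diff_eq_empty {m : ℕ} {t' t : PreOp (m + 1)} {r : Addr m} {q : PreOp (m + 1)}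
    {ρ : Addr m → Addr m} (ht : t.nodes \ {r} = ∅) (hsub : t'.nodes ⊆ Addr.cat r '' q.nodes)
    (hcat : ∀ s ∈ q.nodes, t'.srcFn (Addr.cat r s) = q.srcFn s) : IsSubst t' t r q ρ where
  injOn := ht ▸ Set.injOn_empty ρ
  disjoint := by
    rw [ht, Set.image_empty]
    exact disjoint_bot_left
  nodes_subset := by rwa [ht, Set.image_empty, Set.empty_union]
  srcFn_rewrite := by
    rw [ht]
    exact fun _ h => h.elim
  srcFn_cat := hcat

section Subst

variable {k : ℕ} {g : Addr (k + 1) → PreOp (k + 1)} {r : Addr (k + 1)} {q : PreOp (k + 2)}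
  {Υ : Set (Addr (k + 1) × Addr k)}

/-- The non-degenerate branch of `psub`. The address rewriting `χ` is a parameter because the
degenerate branch uses `chiD` instead of `chiN`. -/
noncomputable def substFn (g : Addr (k + 1) → PreOp (k + 1)) (r : Addr (k + 1))
    (q : PreOp (k + 2)) (χ : Addr (k + 1) → Addr (k + 1)) (a : Addr (k + 1)) : PreOp (k + 1) :=
  if h1 : ∃ s, q.srcFn s ≠ null ∧ a = List.append r s then q.srcFn (choose h1)
  else if h2 : ∃ b, b ≠ r ∧ g b ≠ null ∧ χ b = a then g (choose h2)
  else null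

theorem psub_nd_nd (h : Addr (k + 1) → PreOp (k + 1)) :
    psub (nd g) r (nd h) Υ = nd (substFn g r (nd h) (chiN Υ r)) := rfl

theorem psub_nd_degen_of_forall (w : PreOp k) (hg : ∀ b, g b ≠ null → b = r) :
    psub (nd g) r (degen w) Υ = degen w :=
  if_pos hg

theorem psub_nd_degen (w : PreOp k) (hg : ¬ ∀ b, g b ≠ null → b = r) :
    psub (nd g) r (degen w) Υ = nd (substFn g r (degen w) (chiD r)) := by
  simp only [psub, if_neg hg]
  congr 1
  funext a
  have : ¬ ∃ s, (degen w : PreOp (k + 2)).srcFn s ≠ null ∧ a = List.append r s :=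
    fun ⟨_, h, _⟩ => h rfl
  rw [substFn, dif_neg this]

theorem substFn_congr {χ χ' : Addr (k + 1) → Addr (k + 1)}
    (h : ∀ b, g b ≠ null → b ≠ r → χ b = χ' b) :
    substFn g r q χ = substFn g r q χ' := by
  have : ∀ a, (fun b => b ≠ r ∧ g b ≠ null ∧ χ b = a) =
      (fun b => b ≠ r ∧ g b ≠ null ∧ χ' b = a) :=
    fun a => funext fun b => propext
      ⟨fun ⟨hbr, hb, he⟩ => ⟨hbr, hb, h b hb hbr ▸ he⟩,
        fun ⟨hbr, hb, he⟩ => ⟨hbr, hb, (h b hb hbr).symm ▸ he⟩⟩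
  funext a
  unfold substFn
  rw [this a]

theorem substFn_append {χ : Addr (k + 1) → Addr (k + 1)} {s : Addr (k + 1)}
    (hs : s ∈ q.nodes) :
    substFn g r q χ (r ++ s) = q.srcFn s := by
  have h : ∃ s', q.srcFn s' ≠ null ∧ r ++ s = List.append r s' := ⟨s, hs, rfl⟩
  rw [substFn, dif_pos h, ← List.append_cancel_left (choose_spec h).2]

theorem substFn_apply {χ : Addr (k + 1) → Addr (k + 1)} (hinj : ((nd g).nodes \ {r}).InjOn χ)
    (havoid : ∀ b ∈ (nd g).nodes \ {r}, ∀ s ∈ q.nodes, χ b ≠ r ++ s) {b : Addr (k + 1)}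
    (hb : b ∈ (nd g).nodes \ {r}) : substFn g r q χ (χ b) = g b := by
  have h : ∃ b', b' ≠ r ∧ g b' ≠ null ∧ χ b' = χ b := ⟨b, hb.2, hb.1, rfl⟩
  rw [substFn, dif_neg fun ⟨s, hs, he⟩ => havoid b hb s hs he, dif_pos h]
  obtain ⟨hbr, hgb, he⟩ := choose_spec h
  rw [hinj ⟨hgb, hbr⟩ hb he]

theorem substFn_ne_null {χ : Addr (k + 1) → Addr (k + 1)} {a : Addr (k + 1)}
    (h : substFn g r q χ a ≠ null) :
    (∃ s ∈ q.nodes, a = r ++ s) ∨ ∃ b ∈ (nd g).nodes \ {r}, χ b = a := by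
  unfold substFn at h
  split_ifs at h with h1 h2
  · obtain ⟨s, hs, he⟩ := h1
    exact Or.inl ⟨s, hs, he⟩
  · obtain ⟨b, hbr, hb, he⟩ := h2
    exact Or.inr ⟨b, ⟨hb, hbr⟩, he⟩
  · exact absurd rfl h

theorem chiN_eq_or (hg : IsTreeFn g) (hΥ : IsBijGraph Υ q.leaves (g r).nodes) {b : Addr (k + 1)}
    (hb : b ∈ (nd g).nodes \ {r}) :
    (¬ r <+: b ∧ chiN Υ r b = b) ∨
      ∃ c d x, b = r ++ c :: d ∧ x ∈ q.leaves ∧ (x, c) ∈ Υ ∧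
        chiN Υ r b = r ++ x ++ d := by
  by_cases hrb : r <+: b
  · obtain ⟨c, d, rfl, hc⟩ := hg.eq_append_cons hb.1 hrb hb.2
    obtain ⟨x, hx, hu⟩ := hΥ.2.2 c hc
    exact Or.inr ⟨c, d, x, rfl, (hΥ.1 _ hx).1, hx, chiN_append_cons_of_unique hx hu d⟩
  · exact Or.inl ⟨hrb, chiN_of_not_prefix hrb⟩

theorem chiN_injOn (hg : IsTreeFn g) (hq : IsTree q) (hΥ : IsBijGraph Υ q.leaves (g r).nodes) :
    ((nd g).nodes \ {r}).InjOn (chiN Υ r) := by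
  intro b₁ hb₁ b₂ hb₂ he
  rcases chiN_eq_or hg hΥ hb₁ with ⟨hr₁, he₁⟩ | ⟨c₁, d₁, x₁, rfl, hx₁, hxc₁, he₁⟩ <;>
    rcases chiN_eq_or hg hΥ hb₂ with ⟨hr₂, he₂⟩ | ⟨c₂, d₂, x₂, rfl, hx₂, hxc₂, he₂⟩
  · rwa [he₁, he₂] at he
  · rw [he₁, he₂, List.append_assoc] at he
    exact absurd (he ▸ List.prefix_append r _) hr₁
  · rw [he₁, he₂, List.append_assoc] at he
    exact absurd (he.symm ▸ List.prefix_append r _) hr₂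
  · rw [he₁, he₂, List.append_assoc, List.append_assoc] at he
    have hxd := List.append_cancel_left he
    obtain rfl : x₁ = x₂ := by
      rcases List.prefix_or_prefix_of_prefix (hxd ▸ List.prefix_append x₁ d₁)
        (List.prefix_append x₂ d₂) with h | h
      · exact hq.leaf_antichain hx₁ hx₂ h
      · exact (hq.leaf_antichain hx₂ hx₁ h).symm
    rw [List.append_cancel_left hxd, (hΥ.2.1 x₁ hx₁).unique hxc₁ hxc₂]

theorem chiN_ne_append (hg : IsTreeFn g) (hq : IsTree q) (hΥ : IsBijGraph Υ q.leaves (g r).nodes)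
    {b : Addr (k + 1)} (hb : b ∈ (nd g).nodes \ {r}) {s : Addr (k + 1)} (hs : s ∈ q.nodes) :
    chiN Υ r b ≠ r ++ s := by
  rcases chiN_eq_or hg hΥ hb with ⟨hrb, he⟩ | ⟨c, d, x, rfl, hx, -, he⟩
  · rw [he]
    rintro rfl
    exact hrb (List.prefix_append r s)
  · rw [he, List.append_assoc]
    intro h
    exact hq.not_prefix_node hx hs (List.append_cancel_left h ▸ List.prefix_append x d)

theorem substFn_chiN (hg : IsTreeFn g) (hq : IsTree q) (hΥ : IsBijGraph Υ q.leaves (g r).nodes)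
    {b : Addr (k + 1)} (hb : b ∈ (nd g).nodes \ {r}) :
    substFn g r q (chiN Υ r) (chiN Υ r b) = g b :=
  substFn_apply (chiN_injOn hg hq hΥ) (fun _ hb _ hs => chiN_ne_append hg hq hΥ hb hs) hb

theorem substFn_of_append_eq_self (hg : IsTreeFn g) (hq : IsTree q)
    (hΥ : IsBijGraph Υ q.leaves (g r).nodes) (hr : g r ≠ null) {a : Addr (k + 1)} {c : Addr k}
    (hac : a ++ [c] = r) :
    substFn g r q (chiN Υ r) a ≠ null ∧ (substFn g r q (chiN Υ r) a).srcFn c ≠ null := by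
  have hlen : a.length < r.length := by rw [← hac]; simp
  have hra : ¬ r <+: a := fun h => absurd h.length_le (by omega)
  have ha : a ∈ (nd g).nodes \ {r} :=
    ⟨hg.ne_null_of_prefix hr (hac ▸ List.prefix_append a [c]), by rintro rfl; omega⟩
  have h := substFn_chiN hg hq hΥ ha
  rw [chiN_of_not_prefix hra] at h
  rw [h]
  exact hg a c (hac ▸ hr)

theorem isTreeFn_substFn (hg : IsTreeFn g) (hq : IsTree q)
    (hΥ : IsBijGraph Υ q.leaves (g r).nodes) (hr : g r ≠ null) :
    IsTreeFn (substFn g r q (chiN Υ r)) := by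
  -- The parent of a new node is a node of `q` shifted by `r`, a rewritten node of `t`, or a
  -- proper prefix of `r`.
  intro a c hac
  rcases substFn_ne_null hac with ⟨s, hs, he⟩ | ⟨b, hb, he⟩
  · rcases List.eq_nil_or_concat' s with rfl | ⟨s, c', rfl⟩
    · exact substFn_of_append_eq_self hg hq hΥ hr (by simpa using he)
    · obtain ⟨rfl, rfl⟩ :=
        List.append_singleton_inj.mp (he.trans (List.append_assoc _ _ _).symm)
      have hs' := hq s c hs
      rw [substFn_append hs'.1]
      exact hs'
  · rcases List.eq_nil_or_concat' b with rfl | ⟨b, c', rfl⟩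
    · rw [chiN_of_not_prefix fun h => hb.2 (List.prefix_nil.mp h).symm] at he
      exact absurd he.symm (List.append_ne_nil_of_right_ne_nil a (List.cons_ne_nil c []))
    · have hb' := hg b c' hb.1
      by_cases hbr : b = r
      · subst hbr
        obtain ⟨x, hx, hu⟩ := hΥ.2.2 c' hb'.2
        rw [chiN_append_cons_of_unique hx hu [], List.append_nil] at he
        rcases eq_nil_or_of_mem_leaves (hΥ.1 _ hx).1 with rfl | ⟨x, c'', rfl, hx₁, hx₂⟩
        · exact substFn_of_append_eq_self hg hq hΥ hr (by simpa using he.symm)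
        · obtain ⟨rfl, rfl⟩ :=
            List.append_singleton_inj.mp (he.symm.trans (List.append_assoc _ _ _).symm)
          rw [substFn_append hx₁]
          exact ⟨hx₁, hx₂⟩
      · rw [chiN_append_singleton hbr] at he
        obtain ⟨rfl, rfl⟩ := List.append_singleton_inj.mp he.symm
        rw [substFn_chiN hg hq hΥ ⟨hb'.1, hbr⟩]
        exact hb'

theorem isSubst_substFn (hg : IsTreeFn g) (hq : IsTree q)
    (hΥ : IsBijGraph Υ q.leaves (g r).nodes) :
    IsSubst (nd (substFn g r q (chiN Υ r))) (nd g) r q (chiN Υ r) where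
  injOn := chiN_injOn hg hq hΥ
  disjoint := Set.disjoint_left.mpr <| by
    rintro _ ⟨b, hb, rfl⟩ ⟨s, hs, he⟩
    exact chiN_ne_append hg hq hΥ hb hs he.symm
  nodes_subset a ha := by
    rcases substFn_ne_null ha with ⟨s, hs, rfl⟩ | hb
    exacts [Or.inr ⟨s, hs, rfl⟩, Or.inl hb]
  srcFn_rewrite _ hb := substFn_chiN hg hq hΥ hb
  srcFn_cat _ hs := substFn_append hs

theorem chiD_eq_chiN {w : PreOp k} (hg : IsTreeFn g)
    (hΥ : IsBijGraph Υ (degen w : PreOp (k + 2)).leaves (g r).nodes) {b : Addr (k + 1)}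
    (hb : g b ≠ null) (hbr : b ≠ r) : chiD r b = chiN Υ r b := by
  rcases chiN_eq_or hg hΥ ⟨hb, hbr⟩ with ⟨hrb, he⟩ | ⟨c, d, x, rfl, hx, -, he⟩
  · rw [he, chiD_of_not_prefix hrb]
  · obtain rfl : x = [] := hx
    rw [he, chiD_append_cons, List.append_nil]

theorem isSubst_psub_nd (hg : IsTreeFn g) (hq : IsTree q) (hq₀ : q ≠ null)
    (hΥ : IsBijGraph Υ q.leaves (g r).nodes) (hr : g r ≠ null) :
    IsSubst (psub (nd g) r q Υ) (nd g) r q (chiN Υ r) ∧ IsTree (psub (nd g) r q Υ) := by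
  cases q with
  | null => exact absurd rfl hq₀
  | nd h =>
    rw [psub_nd_nd]
    exact ⟨isSubst_substFn hg hq hΥ, isTreeFn_substFn hg hq hΥ hr⟩
  | degen w =>
    by_cases hall : ∀ b, g b ≠ null → b = r
    · rw [psub_nd_degen_of_forall w hall]
      have hempty : (nd g).nodes \ {r} = ∅ :=
        Set.eq_empty_of_forall_notMem fun b hb => hb.2 (hall b hb.1)
      exact ⟨.of_diff_eq_empty hempty (fun _ h => absurd rfl h) (fun _ h => absurd rfl h),
        fun _ _ h => absurd rfl h⟩
    · rw [psub_nd_degen w hall, substFn_congr fun b hb hbr => chiD_eq_chiN hg hΥ hb hbr]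
      exact ⟨isSubst_substFn hg hq hΥ, isTreeFn_substFn hg hq hΥ hr⟩

end Subst

noncomputable def rewriteAddr : ∀ {m : ℕ}, LCtx (m + 1) → Addr m → Addr m → Addr m
  | 0, _, _, b => b
  | _ + 1, Υ, r, b => chiN Υ r b

theorem rewriteCtx_eq_image : ∀ {m : ℕ} (Υ : LCtx (m + 1)) (r : Addr m)
    (Γ : Set (Addr (m + 1) × Addr m)), rewriteCtx Υ r Γ = Prod.map id (rewriteAddr Υ r) '' Γ
  | 0, _, _, Γ => (Set.image_id' Γ).symm
  | _ + 1, _, _, _ => by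
    ext
    simp [rewriteCtx, rewriteAddr, eq_comm]

theorem psub_ne_null : ∀ {m : ℕ} {t q : PreOp (m + 1)} (r : Addr m) (Υ : LCtx (m + 1)),
    t ≠ null → q ≠ null → psub t r q Υ ≠ null
  | 0, _, _, _, _, _, hq => hq
  | _ + 1, t, q, r, Υ, ht, hq => by
    cases t <;> cases q <;> simp_all [psub]
    split_ifs <;> simp

structure IsSoundSequent {m : ℕ} (Γ : Set (Addr (m + 1) × Addr m)) (p : PreOp (m + 2))
    (t : PreOp (m + 1)) : Prop where
  subject_ne_null : p ≠ null
  target_ne_null : t ≠ null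
  isTree_subject : IsTree p
  isTree_target : IsTree t
  bij : IsBijGraph Γ p.leaves t.nodes
  srcFn_eq_edge : ∀ x y, (x, y) ∈ Γ → ¬ p.IsDeg → t.srcFn y = p.edge x

def IsSound : ∀ n, LCtx n → PreOp n → Tgt n → Prop
  | 0, _, p, _ => p ≠ null
  | 1, _, p, t => p ≠ null ∧ t ≠ null
  | _ + 2, Γ, p, t => IsSoundSequent Γ p t

theorem IsSound.subject_ne_null : ∀ {n : ℕ} {Γ : LCtx n} {p : PreOp n} {t : Tgt n},
    IsSound n Γ p t → p ≠ null
  | 0, _, _, _, h => h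
  | 1, _, _, _, h => h.1
  | _ + 2, _, _, _, h => IsSoundSequent.subject_ne_null h

theorem IsSound.target_ne_null :
    ∀ {n : ℕ} {Γ : LCtx (n + 1)} {p : PreOp (n + 1)} {t : PreOp n},
      IsSound (n + 1) Γ p t → t ≠ null
  | 0, _, _, _, h => h.2
  | _ + 1, _, _, _, h => IsSoundSequent.target_ne_null h

theorem IsSound.isTree_subject : ∀ {n : ℕ} {Γ : LCtx n} {p : PreOp n} {t : Tgt n},
    IsSound n Γ p t → IsTree p
  | 0, _, _, _, _ => trivial
  | 1, _, _, _, _ => trivial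
  | _ + 2, _, _, _, h => IsSoundSequent.isTree_subject h

theorem isSubst_psub_zero (t q : PreOp 1) (r : Addr 0) (Υ : LCtx 1) :
    IsSubst (psub t r q Υ) t r q (rewriteAddr Υ r) := by
  have hempty : t.nodes \ {r} = ∅ := Set.sdiff_eq_empty.mpr fun b _ => Subsingleton.elim b r
  exact .of_diff_eq_empty hempty (fun s hs => ⟨s, hs, rfl⟩) (fun _ _ => rfl)

theorem isSubst_psub : ∀ {m : ℕ} {t : PreOp (m + 1)} {r : Addr m} {q : PreOp (m + 1)}
    {Υ : LCtx (m + 1)} {u : PreOp m}, IsSound (m + 1) Υ q u → IsTree t → r ∈ t.nodes →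
    t.srcFn r = u → IsSubst (psub t r q Υ) t r q (rewriteAddr Υ r) ∧ IsTree (psub t r q Υ)
  | 0, t, r, q, Υ, _, _, _, _, _ => ⟨isSubst_psub_zero t q r Υ, trivial⟩
  | _ + 1, t, r, _, _, _, hs, ht, hr, hru => by
    obtain ⟨g, rfl⟩ : ∃ g, t = nd g := by
      cases t with
      | nd g => exact ⟨g, rfl⟩
      | _ => exact absurd rfl hr
    subst hru
    exact isSubst_psub_nd ht hs.isTree_subject hs.subject_ne_null hs.bij hr

theorem isSoundSequent_degen {n : ℕ} {p : PreOp n} (hp : p ≠ null) :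
    IsSoundSequent {(Addr.eps (n + 1), Addr.eps n)} (degen p) (corolla p) where
  subject_ne_null := nofun
  target_ne_null := corolla_ne_null p
  isTree_subject _ _ h := absurd rfl h
  isTree_target := isTree_corolla p
  bij := by
    rw [leaves_degen, nodes_corolla hp]
    exact IsBijGraph.singleton _ _
  srcFn_eq_edge _ _ _ h := absurd trivial h

theorem isSoundSequent_corolla {n : ℕ} {p : PreOp (n + 1)} (hp : p ≠ null)
    (htree : IsTree p) :
    IsSoundSequent {ab | ∃ a ∈ p.nodes, ab = ([a], a)} (corolla p) p where
  subject_ne_null := corolla_ne_null p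
  target_ne_null := hp
  isTree_subject := isTree_corolla p
  isTree_target := htree
  bij := by
    have h := IsBijGraph.image_pair (S := p.nodes) (f := fun a => [a]) (g := id)
      List.singleton_injective.injOn (Set.injOn_id _)
    rw [Set.image_id] at h
    rw [leaves_corolla hp]
    convert h using 1
    ext
    simp [eq_comm]
  srcFn_eq_edge := by
    rintro _ _ ⟨a, -, he⟩ -
    obtain ⟨rfl, rfl⟩ := Prod.mk.inj he
    exact (edge_append (corolla p) [] _).symm

theorem IsSoundSequent.graft {m : ℕ} {Γ : Set (Addr (m + 1) × Addr m)} {p : PreOp (m + 2)}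
    {t : PreOp (m + 1)} {l : Addr (m + 1)} {r : Addr m} {q : PreOp (m + 1)}
    {Υ : LCtx (m + 1)} {u : PreOp m} (h₁ : IsSoundSequent (insert (l, r) Γ) p t)
    (hlr : (l, r) ∉ Γ) (h₂ : IsSound (m + 1) Υ q u) (he : p.edge l = u) :
    IsSoundSequent
      (rewriteCtx Υ r Γ ∪ {ab | ∃ s ∈ q.nodes, ab = (List.concat l s, Addr.cat r s)})
      (p.graftI l q) (psub t r q Υ) := by
  have hlr' : l ∈ p.leaves ∧ r ∈ t.nodes := h₁.bij.1 (l, r) (Set.mem_insert _ _)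
  obtain ⟨f, rfl⟩ : ∃ f, p = nd f := by
    cases p with
    | nd f => exact ⟨f, rfl⟩
    | null => exact absurd rfl h₁.subject_ne_null
    | degen w =>
      obtain rfl : l = [] := hlr'.1
      exact absurd he.symm h₂.target_ne_null
  have hf : IsTreeFn f := h₁.isTree_subject
  have hq := h₂.subject_ne_null
  obtain ⟨hsub, htree⟩ := isSubst_psub h₂ h₁.isTree_target hlr'.2
    ((h₁.srcFn_eq_edge l r (Set.mem_insert _ _) not_false).trans he)
  have hΓ := h₁.bij.of_insert hlr
  have hnew : {ab | ∃ s ∈ q.nodes, ab = (List.concat l s, Addr.cat r s)} =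
      (fun s => (l ++ [s], Addr.cat r s)) '' q.nodes := by
    ext
    simp [eq_comm]
  rw [rewriteCtx_eq_image, hnew]
  refine ⟨nofun, psub_ne_null r Υ h₁.target_ne_null hq, isTreeFn_graftI hf hlr'.1, htree,
    ?_, ?_⟩
  · rw [leaves_graftI hf hlr'.1 hq, hsub.nodes_eq]
    refine (hΓ.image_snd hsub.injOn).union ?_ (disjoint_leaves_append hlr'.1) hsub.disjoint
    exact IsBijGraph.image_pair (fun _ _ _ _ h => (List.append_singleton_inj.mp h).2)
      (Addr.cat_injective r).injOn
  · rintro x' y' (⟨⟨x, y⟩, hxy, hpair⟩ | ⟨s, hs, hpair⟩) -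
    · obtain ⟨rfl, rfl⟩ : x = x' ∧ rewriteAddr Υ r y = y' := Prod.mk.inj hpair
      rw [hsub.srcFn_rewrite y (hΓ.1 _ hxy).2, edge_graftI_of_mem_leaves hlr'.1 (hΓ.1 _ hxy).1.1]
      exact h₁.srcFn_eq_edge x y (Set.mem_insert_of_mem _ hxy) not_false
    · obtain ⟨rfl, rfl⟩ : l ++ [s] = x' ∧ Addr.cat r s = y' := Prod.mk.inj hpair
      rw [hsub.srcFn_cat s hs, edge_graftI_append]

theorem IsSound.of_derives {n : ℕ} {Γ : LCtx n} {p : PreOp n} {t : Tgt n}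
    (h : Derives n Γ p t) : IsSound n Γ p t := by
  induction h with
  | point => exact nofun
  | degen _ ih => exact isSoundSequent_degen ih.subject_ne_null
  | shift0 _ ih => exact ⟨corolla_ne_null _, ih⟩
  | shiftS _ ih => exact isSoundSequent_corolla ih.subject_ne_null ih.isTree_subject
  | graft _ hlr _ he ih₁ ih₂ => exact ih₁.graft hlr ih₂ he

end PreOp

/-- **Statement 15** (Lemma 4.1.9).  Let `Γ ⊢ p → t` be a derivable sequent in the
unnamed system `OPT?` with `dim p ≥ 2`.  Then `Γ`, as a set of pairs, is the graph of a
bijection between the set `p⁺` of leaf addresses of `p` and the set `t•` of source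
addresses of `t`. -/
theorem stmt15 {m : ℕ} {Γ : PreOp.LCtx (m + 2)} {p : PreOp (m + 2)} {t : PreOp (m + 1)}
    (h : Derives (m + 2) Γ p t) :
    (∀ x ∈ (Γ : Set (Addr (m + 1) × Addr m)), x.1 ∈ PreOp.leaves p ∧ x.2 ∈ PreOp.nodes t) ∧
    (∀ l ∈ PreOp.leaves p, ∃! r, (l, r) ∈ (Γ : Set (Addr (m + 1) × Addr m))) ∧
    (∀ r ∈ PreOp.nodes t, ∃! l, (l, r) ∈ (Γ : Set (Addr (m + 1) × Addr m))) :=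
  (PreOp.IsSound.of_derives h : PreOp.IsSoundSequent Γ p t).bij
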